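/- Let p be a prime, H > 0, and let X = (X_n)_{n∈ℕ₀} be a dt-ss-si process with scaling function b(n) = (|n|_p)^H. Then for all m, n ∈ ℕ₀ with m ≠ n, P(X_m = X_n) = P(X_m = X_n = 0) = P(X_i = 0 for all i ∈ ℕ₀). -/

import Mathlib

/-!
Self-similarity gives `X 0 ≐ |p ^ k|_p ^ H • X 0 → 0`, so `X 0 = 0` a.s., and, since
`|t|_p ≠ 0`, `P(X t = 0) = P(X 1 = 0) =: q` for `t ≥ 1`; with stationary increments also
`P(X s = X t) = q` for `s ≠ t`. Moreover `X (c + g) - X c ≐ |g|_p ^ H • X 1`, so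
`X (c + g) → X c` in probability as `|g|_p → 0`, and events `{X t = X n}` of equal probability `q`
then converge in the pseudometric `P(A ∆ B)`. Dilating by `p ^ (k + 1) - 1 ≡ -1` and shifting
gives the reflection `P(X s = X (s + r) = 0) = P(X r = X (s + r) = 0)`, which makes the zero
events of `p ^ K` and of `(p ^ (K + 1) + 1) * u` asymptotically equal. By dilation invariance and
the triangle inequality for `P(A ∆ B)`, the events `{X u = 0}`, `u ≥ 1`, all coincide a.s., and
the three probabilities are `q`.
-/

open MeasureTheory ProbabilityTheory Filter

noncomputable section

/-- The `p`-adic norm of a natural number, as a real number (`0` for `n = 0`). -/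
def padicNormNat (p n : ℕ) : ℝ := ((padicNorm p (n : ℚ) : ℚ) : ℝ)

/-- Equality in distribution of two families of random variables: the laws of the
induced maps into the product space coincide. -/
def EqDistFam {ι Ω₁ Ω₂ E : Type*} [MeasurableSpace Ω₁] [MeasurableSpace Ω₂]
    [MeasurableSpace E]
    (P₁ : Measure Ω₁) (P₂ : Measure Ω₂) (X : ι → Ω₁ → E) (Y : ι → Ω₂ → E) : Prop :=
  Measure.map (fun ω i => X i ω) P₁ = Measure.map (fun ω i => Y i ω) P₂

/-- A discrete-time process is self-similar with scaling function `b` if for every `n ≥ 1`,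
`(X (n*m))ₘ ≐ (b n • X m)ₘ`. -/
def SelfSimilar {Ω : Type*} [MeasurableSpace Ω] (P : Measure Ω) (X : ℕ → Ω → ℝ)
    (b : ℕ → ℝ) : Prop :=
  ∀ n : ℕ, 1 ≤ n → EqDistFam P P (fun m ω => X (n * m) ω) (fun m ω => b n * X m ω)

/-- A discrete-time process has stationary increments if for every `k ≥ 1`,
`(X (m+1) - X m)ₘ ≐ (X (m+k+1) - X (m+k))ₘ`. -/
def StationaryIncrements {Ω : Type*} [MeasurableSpace Ω] (P : Measure Ω)
    (X : ℕ → Ω → ℝ) : Prop :=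
  ∀ k : ℕ, 1 ≤ k → EqDistFam P P (fun m ω => X (m + 1) ω - X m ω)
    (fun m ω => X (m + k + 1) ω - X (m + k) ω)

open Topology
open scoped ENNReal symmDiff

lemma padicNormNat_pos {p n : ℕ} (hp : p.Prime) (hn : n ≠ 0) : 0 < padicNormNat p n := by
  have : Fact p.Prime := ⟨hp⟩
  have hne : padicNorm p (n : ℚ) ≠ 0 := padicNorm.nonzero (by exact_mod_cast hn)
  unfold padicNormNat
  exact_mod_cast (padicNorm.nonneg _).lt_of_ne' hne

lemma padicNormNat_le_of_pow_dvd {p n k : ℕ} (hp : p.Prime) (h : p ^ k ∣ n) :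
    padicNormNat p n ≤ ((p : ℝ)⁻¹) ^ k := by
  have : Fact p.Prime := ⟨hp⟩
  have hle := (padicNorm.dvd_iff_norm_le (p := p) (n := k) (z := n)).1 (by exact_mod_cast h)
  rw [zpow_neg, zpow_natCast, ← inv_pow] at hle
  have hcast : padicNormNat p n ≤ (((p : ℚ)⁻¹ ^ k : ℚ) : ℝ) := Rat.cast_le.2 hle
  simpa using hcast

lemma tendsto_padicNormNat_rpow {p : ℕ} (hp : p.Prime) {H : ℝ} (hH : 0 < H) {g : ℕ → ℕ}
    (hg : ∀ k, p ^ k ∣ g k) :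
    Tendsto (fun k => padicNormNat p (g k) ^ H) atTop (𝓝 0) := by
  have hp' : (0 : ℝ) < (p : ℝ)⁻¹ := by have := hp.pos; positivity
  have hgeom : Tendsto (fun k : ℕ => (((p : ℝ)⁻¹) ^ H) ^ k) atTop (𝓝 0) :=
    tendsto_pow_atTop_nhds_zero_of_lt_one (by positivity)
      (Real.rpow_lt_one hp'.le (inv_lt_one_of_one_lt₀ (by exact_mod_cast hp.one_lt)) hH)
  refine squeeze_zero (fun k => ?_) (fun k => ?_) hgeom
  · exact Real.rpow_nonneg (by unfold padicNormNat; exact_mod_cast padicNorm.nonneg _) H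
  · rw [← Real.rpow_natCast, ← Real.rpow_mul hp'.le, mul_comm, Real.rpow_mul hp'.le,
      Real.rpow_natCast]
    exact Real.rpow_le_rpow (by unfold padicNormNat; exact_mod_cast padicNorm.nonneg _)
      (padicNormNat_le_of_pow_dvd hp (hg k)) hH.le

lemma padicNormNat_rpow_ne_zero {p n : ℕ} (hp : p.Prime) (hn : 1 ≤ n) (H : ℝ) :
    padicNormNat p n ^ H ≠ 0 :=
  (Real.rpow_pos_of_pos (padicNormNat_pos hp (by omega)) H).ne'

section ConvergenceInMeasure

variable {Ω E : Type*} [MeasurableSpace Ω] {μ : Measure Ω} [IsFiniteMeasure μ]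

theorem tendstoInMeasure_of_identDistrib_sub_const_mul {F : ℕ → Ω → ℝ} {G Z : Ω → ℝ}
    {b : ℕ → ℝ} (hZ : Measurable Z)
    (h : ∀ k, IdentDistrib (fun ω => F k ω - G ω) (fun ω => b k * Z ω) μ μ)
    (hb : Tendsto b atTop (𝓝 0)) : TendstoInMeasure μ F atTop G := by
  have hbZ : TendstoInMeasure μ (fun k ω => b k * Z ω) atTop 0 :=
    tendstoInMeasure_of_tendsto_ae (fun k => (hZ.const_mul _).aestronglyMeasurable)
      (ae_of_all _ fun ω => by simpa using hb.mul_const (Z ω))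
  rw [tendstoInMeasure_iff_dist] at hbZ ⊢
  intro ε hε
  convert hbZ ε hε using 2 with k
  simpa [Real.dist_eq] using
    (h k).measure_mem_eq (measurableSet_le measurable_const measurable_abs :
      MeasurableSet {x : ℝ | ε ≤ |x|})

variable [MetricSpace E] [MeasurableSpace E] [OpensMeasurableSpace E]
  [SecondCountableTopology E]

theorem MeasureTheory.TendstoInMeasure.tendsto_measure_eq_sdiff_eq {V Y : Ω → E}
    {W : ℕ → Ω → E} (hV : Measurable V) (hY : Measurable Y) (h : TendstoInMeasure μ W atTop Y) :
    Tendsto (fun k => μ ({ω | V ω = W k ω} \ {ω | V ω = Y ω})) atTop (𝓝 0) := by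
  set S : ℕ → Set Ω := fun n => {ω | V ω ≠ Y ω ∧ dist (V ω) (Y ω) < 1 / (n + 1)}
  have hS : Tendsto (fun n => μ (S n)) atTop (𝓝 0) := by
    have hmeas : ∀ n, MeasurableSet (S n) := fun n =>
      (measurableSet_eq_fun hV hY).compl.inter
        (measurableSet_lt (hV.dist hY) measurable_const)
    have hanti : Antitone S := fun m n hmn ω ⟨hne, hlt⟩ =>
      ⟨hne, hlt.trans_le (one_div_le_one_div_of_le (by positivity) (by gcongr))⟩
    have hempty : ⋂ n, S n = ∅ := by
      refine Set.eq_empty_of_forall_notMem fun ω hω => ?_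
      obtain ⟨hne, -⟩ := Set.mem_iInter.1 hω 0
      obtain ⟨n, hn⟩ := exists_nat_one_div_lt (dist_pos.2 hne)
      exact (Set.mem_iInter.1 hω n).2.not_gt hn
    simpa [hempty, Function.comp_def] using tendsto_measure_iInter_atTop (μ := μ)
      (fun n => (hmeas n).nullMeasurableSet) hanti ⟨0, measure_ne_top _ _⟩
  rw [ENNReal.tendsto_nhds_zero]
  intro δ hδ
  obtain ⟨n, hn⟩ := (ENNReal.tendsto_nhds_zero.1 hS (δ / 2) (ENNReal.half_pos hδ.ne')).exists
  have hW := tendstoInMeasure_iff_dist.1 h (1 / ((n : ℝ) + 1)) Nat.one_div_pos_of_nat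
  filter_upwards [ENNReal.tendsto_nhds_zero.1 hW (δ / 2) (ENNReal.half_pos hδ.ne')] with k hk
  have hsub : {ω | V ω = W k ω} \ {ω | V ω = Y ω} ⊆
      {ω | 1 / ((n : ℝ) + 1) ≤ dist (W k ω) (Y ω)} ∪ S n := by
    rintro ω ⟨hVW, hVY⟩
    by_cases hclose : dist (W k ω) (Y ω) < 1 / ((n : ℝ) + 1)
    · exact Or.inr ⟨hVY, by rwa [hVW]⟩
    · exact Or.inl (not_lt.1 hclose)
  calc μ ({ω | V ω = W k ω} \ {ω | V ω = Y ω})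
      ≤ μ {ω | 1 / ((n : ℝ) + 1) ≤ dist (W k ω) (Y ω)} + μ (S n) :=
        (measure_mono hsub).trans (measure_union_le _ _)
    _ ≤ δ / 2 + δ / 2 := add_le_add hk hn
    _ = δ := ENNReal.add_halves δ

theorem MeasureTheory.TendstoInMeasure.tendsto_measure_eq_symmDiff_eq {V Y : Ω → E}
    {W : ℕ → Ω → E} (hV : Measurable V) (hY : Measurable Y) (hW : ∀ k, Measurable (W k))
    (h : TendstoInMeasure μ W atTop Y)
    (heq : ∀ k, μ {ω | V ω = W k ω} = μ {ω | V ω = Y ω}) :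
    Tendsto (fun k => μ ({ω | V ω = W k ω} ∆ {ω | V ω = Y ω})) atTop (𝓝 0) := by
  have hsdiff := h.tendsto_measure_eq_sdiff_eq hV hY
  refine (add_zero (0 : ℝ≥0∞) ▸ hsdiff.add hsdiff).congr fun k => ?_
  have hWk := (measurableSet_eq_fun hV (hW k)).nullMeasurableSet (μ := μ)
  have hVY := (measurableSet_eq_fun hV hY).nullMeasurableSet (μ := μ)
  rw [measure_symmDiff_eq hWk hVY, measure_sdiff_symm hWk hVY (heq k) (measure_ne_top _ _)]

end ConvergenceInMeasure

section SymmDiff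

variable {Ω : Type*} [MeasurableSpace Ω] {μ : Measure Ω}

theorem measure_inter_eq_of_tendsto_symmDiff {E F : ℕ → Set Ω} {E' F' : Set Ω} {c : ℝ≥0∞}
    (hc : ∀ k, μ (E k ∩ F k) = c) (hE : Tendsto (fun k => μ (E k ∆ E')) atTop (𝓝 0))
    (hF : Tendsto (fun k => μ (F k ∆ F')) atTop (𝓝 0)) : μ (E' ∩ F') = c := by
  have hsub : ∀ k, (E k ∩ F k) ∆ (E' ∩ F') ⊆ E k ∆ E' ∪ F k ∆ F' := fun k ω => by
    simp only [Set.mem_symmDiff, Set.mem_inter_iff, Set.mem_union]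
    tauto
  have hlim : Tendsto (fun k => μ ((E k ∩ F k) ∆ (E' ∩ F'))) atTop (𝓝 0) :=
    tendsto_of_tendsto_of_tendsto_of_le_of_le tendsto_const_nhds (by simpa using hE.add hF)
      (fun _ => zero_le) fun k => (measure_mono (hsub k)).trans (measure_union_le _ _)
  refine le_antisymm ?_ ?_
  · refine tsub_eq_zero_iff_le.1 (le_antisymm (ge_of_tendsto' hlim fun k => ?_) zero_le)
    rw [symmDiff_comm, ← hc k]
    exact le_measure_symmDiff
  · refine tsub_eq_zero_iff_le.1 (le_antisymm (ge_of_tendsto' hlim fun k => ?_) zero_le)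
    rw [← hc k]
    exact le_measure_symmDiff

variable [IsFiniteMeasure μ]

theorem measure_symmDiff_eq_sub_add_sub {A B : Set Ω} (hA : MeasurableSet A)
    (hB : MeasurableSet B) : μ (A ∆ B) = (μ A - μ (A ∩ B)) + (μ B - μ (A ∩ B)) := by
  rw [measure_symmDiff_eq hA.nullMeasurableSet hB.nullMeasurableSet, ← Set.sdiff_self_inter,
    ← Set.sdiff_self_inter (s := B), Set.inter_comm B,
    measure_sdiff Set.inter_subset_left (hA.inter hB).nullMeasurableSet (measure_ne_top _ _),
    measure_sdiff Set.inter_subset_right (hA.inter hB).nullMeasurableSet (measure_ne_top _ _)]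

theorem measure_symmDiff_eq_of_measure_inter_eq {A B A' B' : Set Ω} (hA : MeasurableSet A)
    (hB : MeasurableSet B) (hA' : MeasurableSet A') (hB' : MeasurableSet B')
    (hAA' : μ A = μ A') (hBB' : μ B = μ B') (h : μ (A ∩ B) = μ (A' ∩ B')) :
    μ (A ∆ B) = μ (A' ∆ B') := by
  rw [measure_symmDiff_eq_sub_add_sub hA hB, measure_symmDiff_eq_sub_add_sub hA' hB', hAA', hBB',
    h]

end SymmDiff

theorem EqDistFam.identDistrib {ι Ω₁ Ω₂ E : Type*} [MeasurableSpace Ω₁] [MeasurableSpace Ω₂]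
    [MeasurableSpace E] {P₁ : Measure Ω₁} {P₂ : Measure Ω₂} {F : ι → Ω₁ → E} {G : ι → Ω₂ → E}
    (hF : ∀ i, Measurable (F i)) (hG : ∀ i, Measurable (G i)) (h : EqDistFam P₁ P₂ F G) :
    IdentDistrib (fun ω i => F i ω) (fun ω i => G i ω) P₁ P₂ :=
  ⟨(measurable_pi_lambda _ hF).aemeasurable, (measurable_pi_lambda _ hG).aemeasurable, h⟩

section Processes

variable {Ω : Type*} [MeasurableSpace Ω] {P : Measure Ω} {X : ℕ → Ω → ℝ}

theorem SelfSimilar.identDistrib {b : ℕ → ℝ} (hX : ∀ n, Measurable (X n))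
    (h : SelfSimilar P X b) {a : ℕ} (ha : 1 ≤ a) :
    IdentDistrib (fun ω n => X (a * n) ω) (fun ω n => b a * X n ω) P P :=
  EqDistFam.identDistrib (fun _ => hX _) (fun n => (hX n).const_mul _) (h a ha)

theorem StationaryIncrements.identDistrib (hX : ∀ n, Measurable (X n))
    (h : StationaryIncrements P X) {c : ℕ} (hc : 1 ≤ c) :
    IdentDistrib (fun ω n => X (n + c) ω - X c ω) (fun ω n => X n ω - X 0 ω) P P := by
  have hinc := EqDistFam.identDistrib (fun _ => (hX _).sub (hX _))
    (fun _ => (hX _).sub (hX _)) (h c hc)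
  have hsum : Measurable fun (x : ℕ → ℝ) (n : ℕ) => ∑ j ∈ Finset.range n, x j :=
    measurable_pi_lambda _ fun n => Finset.measurable_sum _ fun j _ => measurable_pi_apply j
  convert (hinc.comp hsum).symm using 1 <;> ext ω n
  · have hshift : ∀ j, X (j + c + 1) ω - X (j + c) ω = X (j + 1 + c) ω - X (j + c) ω :=
      fun j => by rw [add_right_comm]
    simp only [Function.comp_apply, Pi.sub_apply]
    rw [Finset.sum_congr rfl fun j _ => hshift j,
      Finset.sum_range_sub (fun j => X (j + c) ω), zero_add]
  · exact (Finset.sum_range_sub (fun j => X j ω) n).symm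

theorem SelfSimilar.ae_eq_zero_at_zero [IsFiniteMeasure P] {b : ℕ → ℝ}
    (hX : ∀ n, Measurable (X n)) (h : SelfSimilar P X b) {g : ℕ → ℕ} (hg : ∀ k, 1 ≤ g k)
    (hb : Tendsto (fun k => b (g k)) atTop (𝓝 0)) : ∀ᵐ ω ∂P, X 0 ω = 0 := by
  have hconv : TendstoInMeasure P (fun _ => X 0) atTop 0 :=
    tendstoInMeasure_of_identDistrib_sub_const_mul (hX 0) (fun k => by
      simpa [Function.comp_def] using (h.identDistrib hX (hg k)).comp (measurable_pi_apply 0)) hb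
  obtain ⟨-, -, hae⟩ := hconv.exists_seq_tendsto_ae
  filter_upwards [hae] with ω hω
  exact tendsto_nhds_unique tendsto_const_nhds hω

theorem SelfSimilar.measure_zero_zero_dilate {b : ℕ → ℝ} (hX : ∀ n, Measurable (X n))
    (h : SelfSimilar P X b) {a : ℕ} (ha : 1 ≤ a) (hb : b a ≠ 0) (s t : ℕ) :
    P {ω | X (a * s) ω = 0 ∧ X (a * t) ω = 0} = P {ω | X s ω = 0 ∧ X t ω = 0} := by
  have hS : MeasurableSet {x : ℕ → ℝ | x s = 0 ∧ x t = 0} :=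
    (measurableSet_eq_fun (measurable_pi_apply s) measurable_const).inter
      (measurableSet_eq_fun (measurable_pi_apply t) measurable_const)
  simpa [hb] using (h.identDistrib hX ha).measure_mem_eq hS

theorem SelfSimilar.measure_zero_dilate {b : ℕ → ℝ} (hX : ∀ n, Measurable (X n))
    (h : SelfSimilar P X b) {a : ℕ} (ha : 1 ≤ a) (hb : b a ≠ 0) (s : ℕ) :
    P {ω | X (a * s) ω = 0} = P {ω | X s ω = 0} := by
  simpa using h.measure_zero_zero_dilate hX ha hb s s

theorem SelfSimilar.measure_zero_symmDiff_dilate [IsFiniteMeasure P] {b : ℕ → ℝ}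
    (hX : ∀ n, Measurable (X n)) (h : SelfSimilar P X b) {a : ℕ} (ha : 1 ≤ a) (hb : b a ≠ 0)
    (s t : ℕ) :
    P ({ω | X (a * s) ω = 0} ∆ {ω | X (a * t) ω = 0}) =
      P ({ω | X s ω = 0} ∆ {ω | X t ω = 0}) :=
  measure_symmDiff_eq_of_measure_inter_eq (measurableSet_eq_fun (hX _) measurable_const)
    (measurableSet_eq_fun (hX _) measurable_const) (measurableSet_eq_fun (hX _) measurable_const)
    (measurableSet_eq_fun (hX _) measurable_const) (h.measure_zero_dilate hX ha hb s)
    (h.measure_zero_dilate hX ha hb t) (h.measure_zero_zero_dilate hX ha hb s t)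

theorem StationaryIncrements.identDistrib_of_ae_zero (hX : ∀ n, Measurable (X n))
    (h : StationaryIncrements P X) (hX0 : ∀ᵐ ω ∂P, X 0 ω = 0) (c : ℕ) :
    IdentDistrib (fun ω n => X (n + c) ω - X c ω) (fun ω n => X n ω) P P := by
  have h0 : IdentDistrib (fun ω n => X n ω - X 0 ω) (fun ω n => X n ω) P P :=
    IdentDistrib.of_ae_eq (measurable_pi_lambda _ fun n => (hX n).sub (hX 0)).aemeasurable
      (by filter_upwards [hX0] with ω hω using funext fun n => by simp [hω])
  rcases Nat.eq_zero_or_pos c with rfl | hc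
  · simpa using h0
  · exact (h.identDistrib hX hc).trans h0

theorem StationaryIncrements.measure_eq_add_and_eq_add (hX : ∀ n, Measurable (X n))
    (h : StationaryIncrements P X) (hX0 : ∀ᵐ ω ∂P, X 0 ω = 0) (c i j : ℕ) :
    P {ω | X c ω = X (i + c) ω ∧ X c ω = X (j + c) ω} = P {ω | X i ω = 0 ∧ X j ω = 0} := by
  have hS : MeasurableSet {x : ℕ → ℝ | x i = 0 ∧ x j = 0} :=
    (measurableSet_eq_fun (measurable_pi_apply i) measurable_const).inter
      (measurableSet_eq_fun (measurable_pi_apply j) measurable_const)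
  convert (h.identDistrib_of_ae_zero hX hX0 c).measure_mem_eq hS using 2 <;> ext ω <;>
    simp [sub_eq_zero, eq_comm]

theorem tendstoInMeasure_add_of_selfSimilar [IsFiniteMeasure P] {b : ℕ → ℝ}
    (hX : ∀ n, Measurable (X n)) (hss : SelfSimilar P X b) (hsi : StationaryIncrements P X)
    {g : ℕ → ℕ} (hg : ∀ k, 1 ≤ g k) (hb : Tendsto (fun k => b (g k)) atTop (𝓝 0)) (c : ℕ) :
    TendstoInMeasure P (fun k => X (g k + c)) atTop (X c) := by
  have hX0 := hss.ae_eq_zero_at_zero hX hg hb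
  refine tendstoInMeasure_of_identDistrib_sub_const_mul (hX 1) (fun k => ?_) hb
  have hshift := (hsi.identDistrib_of_ae_zero hX hX0 c).comp (measurable_pi_apply (g k))
  have hdil := (hss.identDistrib hX (hg k)).comp (measurable_pi_apply 1)
  simp only [Function.comp_def, mul_one] at hshift hdil
  exact hshift.trans hdil

section PadicScaling

variable {p : ℕ} {H : ℝ} [IsFiniteMeasure P]

theorem ae_eq_zero_at_zero_of_padic (hX : ∀ n, Measurable (X n)) (hp : p.Prime) (hH : 0 < H)
    (hss : SelfSimilar P X (fun n => padicNormNat p n ^ H)) : ∀ᵐ ω ∂P, X 0 ω = 0 :=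
  hss.ae_eq_zero_at_zero hX (g := fun k => p ^ k) (fun _ => Nat.one_le_pow _ _ hp.pos)
    (tendsto_padicNormNat_rpow hp hH fun _ => dvd_rfl)

omit [IsFiniteMeasure P] in
theorem measure_zero_eq_of_padic (hX : ∀ n, Measurable (X n)) (hp : p.Prime)
    (hss : SelfSimilar P X (fun n => padicNormNat p n ^ H)) {n : ℕ} (hn : 1 ≤ n) :
    P {ω | X n ω = 0} = P {ω | X 1 ω = 0} := by
  simpa using hss.measure_zero_dilate hX hn (padicNormNat_rpow_ne_zero hp hn H) 1

theorem measure_eq_eq_of_padic (hX : ∀ n, Measurable (X n)) (hp : p.Prime) (hH : 0 < H)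
    (hss : SelfSimilar P X (fun n => padicNormNat p n ^ H)) (hsi : StationaryIncrements P X)
    {s t : ℕ} (hst : s ≠ t) : P {ω | X s ω = X t ω} = P {ω | X 1 ω = 0} := by
  wlog hlt : s < t generalizing s t
  · rw [show {ω | X s ω = X t ω} = {ω | X t ω = X s ω} from Set.ext fun ω => eq_comm]
    exact this hst.symm (by omega)
  obtain ⟨g, rfl⟩ : ∃ g, t = g + s := ⟨t - s, by omega⟩
  have := hsi.measure_eq_add_and_eq_add hX (ae_eq_zero_at_zero_of_padic hX hp hH hss) s g g
  simp only [and_self] at this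
  rw [this, measure_zero_eq_of_padic hX hp hss (by omega)]

theorem tendsto_measure_eq_symmDiff_eq_of_padic (hX : ∀ n, Measurable (X n)) (hp : p.Prime)
    (hH : 0 < H) (hss : SelfSimilar P X (fun n => padicNormNat p n ^ H))
    (hsi : StationaryIncrements P X) {t c : ℕ} (htc : t ≠ c) {g : ℕ → ℕ}
    (hg : ∀ k, p ^ k ∣ g k) (hg1 : ∀ k, 1 ≤ g k) (hgt : ∀ k, t ≠ g k + c) :
    Tendsto (fun k => P ({ω | X t ω = X (g k + c) ω} ∆ {ω | X t ω = X c ω})) atTop (𝓝 0) :=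
  (tendstoInMeasure_add_of_selfSimilar hX hss hsi hg1 (tendsto_padicNormNat_rpow hp hH hg)
    c).tendsto_measure_eq_symmDiff_eq (hX t) (hX c) (fun _ => hX _) fun k => by
      rw [measure_eq_eq_of_padic hX hp hH hss hsi (hgt k),
        measure_eq_eq_of_padic hX hp hH hss hsi htc]

theorem tendsto_measure_zero_symmDiff_zero_of_padic (hX : ∀ n, Measurable (X n)) (hp : p.Prime)
    (hH : 0 < H) (hss : SelfSimilar P X (fun n => padicNormNat p n ^ H))
    (hsi : StationaryIncrements P X) {c : ℕ} (hc : 1 ≤ c) {g : ℕ → ℕ}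
    (hg : ∀ k, p ^ k ∣ g k) (hg1 : ∀ k, 1 ≤ g k) :
    Tendsto (fun k => P ({ω | X (g k + c) ω = 0} ∆ {ω | X c ω = 0})) atTop (𝓝 0) := by
  have hzero : ∀ n, {ω | X n ω = 0} = {ω | (fun _ => (0 : ℝ)) ω = X n ω} :=
    fun n => Set.ext fun ω => eq_comm
  simp only [hzero]
  refine (tendstoInMeasure_add_of_selfSimilar hX hss hsi hg1
    (tendsto_padicNormNat_rpow hp hH hg) c).tendsto_measure_eq_symmDiff_eq measurable_const
    (hX c) (fun _ => hX _) fun k => ?_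
  rw [← hzero, ← hzero, measure_zero_eq_of_padic hX hp hss (by have := hg1 k; omega),
    measure_zero_eq_of_padic hX hp hss hc]

theorem measure_zero_zero_reflect_of_padic (hX : ∀ n, Measurable (X n)) (hp : p.Prime)
    (hH : 0 < H) (hss : SelfSimilar P X (fun n => padicNormNat p n ^ H))
    (hsi : StationaryIncrements P X) {s : ℕ} (hs : 1 ≤ s) (r : ℕ) :
    P {ω | X s ω = 0 ∧ X (s + r) ω = 0} = P {ω | X r ω = 0 ∧ X (s + r) ω = 0} := by
  have hX0 := ae_eq_zero_at_zero_of_padic hX hp hH hss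
  have hpk : ∀ k, 2 ≤ p ^ (k + 1) := fun k => hp.two_le.trans (Nat.le_self_pow (by omega) p)
  have hlt : ∀ k n, 1 ≤ n → 2 * n ≤ n * p ^ (k + 1) := fun k n _ => by
    rw [mul_comm]; exact Nat.mul_le_mul_left n (hpk k)
  -- Dilating by `p ^ (k + 1) - 1` and shifting by `s + r` moves the pair `(s, s + r)`
  -- `p`-adically close to `(r, 0)`.
  have hconst : ∀ k, P ({ω | X (s + r) ω = X (s * p ^ (k + 1) + r) ω} ∩
      {ω | X (s + r) ω = X ((s + r) * p ^ (k + 1) + 0) ω}) =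
      P {ω | X s ω = 0 ∧ X (s + r) ω = 0} := by
    intro k
    have hm : 1 ≤ p ^ (k + 1) - 1 := by have := hpk k; omega
    have hidx : ∀ n, n * p ^ (k + 1) = (p ^ (k + 1) - 1) * n + n := fun n => by
      rw [Nat.sub_mul, one_mul, Nat.sub_add_cancel (Nat.le_mul_of_pos_left n (by omega)),
        mul_comm]
    rw [hidx, hidx, add_assoc, add_zero]
    exact (hsi.measure_eq_add_and_eq_add hX hX0 _ _ _).trans
      (hss.measure_zero_zero_dilate hX hm (padicNormNat_rpow_ne_zero hp hm H) s (s + r))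
  have hE := tendsto_measure_eq_symmDiff_eq_of_padic hX hp hH hss hsi (t := s + r) (c := r)
    (by omega) (g := fun k => s * p ^ (k + 1))
    (fun k => Dvd.dvd.mul_left (pow_dvd_pow p (by omega)) s)
    (fun k => by have := hlt k s hs; omega) (fun k => by have := hlt k s hs; omega)
  have hF := tendsto_measure_eq_symmDiff_eq_of_padic hX hp hH hss hsi (t := s + r) (c := 0)
    (by omega) (g := fun k => (s + r) * p ^ (k + 1))
    (fun k => Dvd.dvd.mul_left (pow_dvd_pow p (by omega)) _)
    (fun k => by have := hlt k (s + r) (by omega); omega)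
    (fun k => by have := hlt k (s + r) (by omega); omega)
  rw [← measure_inter_eq_of_tendsto_symmDiff hconst hE hF]
  refine measure_congr (Filter.Eventually.set_eq ?_)
  filter_upwards [hX0] with ω hω
  simp only [Set.mem_inter_iff, Set.mem_ofPred_eq, hω]
  constructor <;> rintro ⟨h1, h2⟩ <;> constructor <;> linarith

theorem tendsto_measure_zero_symmDiff_pow_of_padic (hX : ∀ n, Measurable (X n)) (hp : p.Prime)
    (hH : 0 < H) (hss : SelfSimilar P X (fun n => padicNormNat p n ^ H))
    (hsi : StationaryIncrements P X) {w : ℕ} (hw : 1 ≤ w) :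
    Tendsto (fun K => P ({ω | X (p ^ K) ω = 0} ∆ {ω | X ((p ^ (K + 1) + 1) * w) ω = 0}))
      atTop (𝓝 0) := by
  have hwp : 2 ≤ w * p := hp.two_le.trans (Nat.le_mul_of_pos_left p hw)
  have hmeas : ∀ n, MeasurableSet {ω | X n ω = 0} := fun n =>
    measurableSet_eq_fun (hX n) measurable_const
  -- `(p ^ (K + 1) + 1) * w = p ^ K + r K`: reflection trades `p ^ K` for `r K`, and both `r K`
  -- and `(p ^ (K + 1) + 1) * w` tend to `w` `p`-adically.
  set r : ℕ → ℕ := fun K => (w * p - 1) * p ^ K + w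
  have hbound : ∀ K, P ({ω | X (p ^ K) ω = 0} ∆ {ω | X ((p ^ (K + 1) + 1) * w) ω = 0}) ≤
      P ({ω | X (r K) ω = 0} ∆ {ω | X w ω = 0}) +
        P ({ω | X (w * p ^ (K + 1) + w) ω = 0} ∆ {ω | X w ω = 0}) := by
    intro K
    have hpK : 1 ≤ p ^ K := Nat.one_le_pow _ _ hp.pos
    have hidx : (p ^ (K + 1) + 1) * w = p ^ K + r K := by
      simp only [r]; zify [(by omega : 1 ≤ w * p)]; ring
    have hreflect := measure_symmDiff_eq_of_measure_inter_eq (hmeas _) (hmeas _) (hmeas _)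
      (hmeas _) (by rw [measure_zero_eq_of_padic hX hp hss hpK,
        measure_zero_eq_of_padic hX hp hss (show 1 ≤ r K by simp only [r]; omega)]) rfl
      (measure_zero_zero_reflect_of_padic hX hp hH hss hsi hpK (r K))
    rw [hidx, hreflect, ← hidx, show (p ^ (K + 1) + 1) * w = w * p ^ (K + 1) + w by ring,
      symmDiff_comm {ω | X (w * p ^ (K + 1) + w) ω = 0}]
    exact measure_symmDiff_le _ _ _
  have hr := tendsto_measure_zero_symmDiff_zero_of_padic hX hp hH hss hsi hw
    (g := fun K => (w * p - 1) * p ^ K) (fun K => dvd_mul_left _ _)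
    (fun K => Nat.one_le_iff_ne_zero.2 (Nat.mul_ne_zero (by omega) (pow_ne_zero _ hp.ne_zero)))
  have hdil := tendsto_measure_zero_symmDiff_zero_of_padic hX hp hH hss hsi hw
    (g := fun K => w * p ^ (K + 1)) (fun K => Dvd.dvd.mul_left (pow_dvd_pow p (by omega)) w)
    (fun K => Nat.one_le_iff_ne_zero.2 (Nat.mul_ne_zero (by omega) (pow_ne_zero _ hp.ne_zero)))
  exact tendsto_of_tendsto_of_tendsto_of_le_of_le tendsto_const_nhds
    (by simpa using hr.add hdil) (fun _ => zero_le) hbound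

theorem measure_zero_symmDiff_zero_of_padic (hX : ∀ n, Measurable (X n)) (hp : p.Prime)
    (hH : 0 < H) (hss : SelfSimilar P X (fun n => padicNormNat p n ^ H))
    (hsi : StationaryIncrements P X) {u v : ℕ} (hu : 1 ≤ u) (hv : 1 ≤ v) :
    P ({ω | X u ω = 0} ∆ {ω | X v ω = 0}) = 0 := by
  have hlim := (tendsto_measure_zero_symmDiff_pow_of_padic hX hp hH hss hsi hu).add
    (tendsto_measure_zero_symmDiff_pow_of_padic hX hp hH hss hsi hv)
  refine le_antisymm (ge_of_tendsto' (by simpa using hlim) fun K => ?_) zero_le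
  have hm : 1 ≤ p ^ (K + 1) + 1 := by omega
  rw [← hss.measure_zero_symmDiff_dilate hX hm (padicNormNat_rpow_ne_zero hp hm H),
    symmDiff_comm {ω | X (p ^ K) ω = 0}]
  exact measure_symmDiff_le _ _ _

theorem ae_eq_zero_iff_of_padic (hX : ∀ n, Measurable (X n)) (hp : p.Prime)
    (hH : 0 < H) (hss : SelfSimilar P X (fun n => padicNormNat p n ^ H))
    (hsi : StationaryIncrements P X) :
    ∀ᵐ ω ∂P, ∀ i, X i ω = 0 ↔ (i = 0 ∨ X 1 ω = 0) := by
  rw [ae_all_iff]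
  intro i
  rcases Nat.eq_zero_or_pos i with rfl | hi
  · filter_upwards [ae_eq_zero_at_zero_of_padic hX hp hH hss] with ω hω
    simp [hω]
  · filter_upwards [(measure_symmDiff_eq_zero_iff.1
      (measure_zero_symmDiff_zero_of_padic hX hp hH hss hsi hi le_rfl)).mem_iff] with ω hω
    simpa [hi.ne'] using hω

end PadicScaling

end Processes

/-- Proposition 2.6 (4): for a type-II dt-ss-si process and `m ≠ n`,
`P(Xₘ = Xₙ) = P(Xₘ = Xₙ = 0) = P(∀ i, Xᵢ = 0)`. -/
theorem stmt10 {Ω : Type*} [MeasurableSpace Ω] (P : Measure Ω) [IsProbabilityMeasure P]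
    (X : ℕ → Ω → ℝ) (hXmeas : ∀ n, Measurable (X n))
    (p : ℕ) (hp : p.Prime) (H : ℝ) (hH : 0 < H)
    (hss : SelfSimilar P X (fun n => (padicNormNat p n) ^ H))
    (hsi : StationaryIncrements P X) :
    ∀ m n : ℕ, m ≠ n →
      P {ω | X m ω = X n ω} = P {ω | X m ω = X n ω ∧ X m ω = 0} ∧
      P {ω | X m ω = X n ω ∧ X m ω = 0} = P {ω | ∀ i : ℕ, X i ω = 0} := by
  intro m n hmn
  have hzero := ae_eq_zero_iff_of_padic hXmeas hp hH hss hsi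
  refine ⟨(measure_eq_eq_of_padic hXmeas hp hH hss hsi hmn).trans
    (measure_congr (Filter.Eventually.set_eq ?_)), measure_congr (Filter.Eventually.set_eq ?_)⟩
  all_goals
    filter_upwards [hzero] with ω hω
    grind [hω m, hω n]
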